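/- Let R be a commutative Noetherian ring and M, N finitely generated R-modules with Ass(M) ∩ Ass(N) = ∅. Then for any R-linear map f : M → N and any prime 𝔭 of R, the 𝔭-torsion of (ker f)_𝔭 equals the 𝔭-torsion of M_𝔭 whenever 𝔭 ∈ Ass(M); in particular ℓ_𝔭(ker f) = ℓ_𝔭(M) for all associated primes 𝔭 of M. -/

import Mathlib

/-! Localization at `𝔭` is exact, so `(ker f)_𝔭 = ker(f_𝔭)`, and `H⁰_𝔭` of a submodule is the
intersection with `H⁰_𝔭` of the ambient module. Since `𝔭 ∉ Ass(N)`, the `𝔭`-torsion of `N_𝔭`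
vanishes, so `f_𝔭` kills `H⁰_𝔭(M)`, which therefore already lies in `(ker f)_𝔭`. -/

/-- The `𝔭`-torsion submodule `H⁰_𝔭(M)` of the localization `M_𝔭`: the elements of
`LocalizedModule 𝔭.primeCompl M` annihilated by some power of `𝔭 R_𝔭`. -/
noncomputable def pTorsion {R : Type*} [CommRing R] (p : Ideal R) [p.IsPrime]
    (M : Type*) [AddCommGroup M] [Module R M] :
    Submodule (Localization.AtPrime p) (LocalizedModule p.primeCompl M) :=
  ⨆ n : ℕ,
    Submodule.torsionBySet (Localization.AtPrime p) (LocalizedModule p.primeCompl M)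
      ((Ideal.map (algebraMap R (Localization.AtPrime p)) p ^ n :
        Ideal (Localization.AtPrime p)) : Set (Localization.AtPrime p))

/-- The length of a module: the Krull dimension of its lattice of submodules
(`⊥` never occurs; the value is `⊤` when there are chains of unbounded length). -/
noncomputable def modLength (A : Type*) (M : Type*) [Ring A] [AddCommGroup M] [Module A M] :
    WithBot ℕ∞ :=
  Order.krullDim (Submodule A M)

/-- The local multiplicity `ℓ_𝔭(M)`: the length over `R_𝔭` of the `𝔭`-torsion submodule
of the localization `M_𝔭`. -/
noncomputable def lmult {R : Type*} [CommRing R] (p : PrimeSpectrum R)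
    (M : Type*) [AddCommGroup M] [Module R M] : WithBot ℕ∞ :=
  modLength (Localization.AtPrime p.asIdeal) (pTorsion p.asIdeal M)

open IsLocalRing

section pTorsion

variable {R : Type*} [CommRing R] {p : Ideal R} [p.IsPrime]
  {M N : Type*} [AddCommGroup M] [Module R M] [AddCommGroup N] [Module R N]

lemma mem_pTorsion_iff {x : LocalizedModule p.primeCompl M} :
    x ∈ pTorsion p M ↔
      ∃ n : ℕ, ∀ a ∈ maximalIdeal (Localization.AtPrime p) ^ n, a • x = 0 := by
  have hdir : Directed (· ≤ ·) fun n : ℕ =>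
      Submodule.torsionBySet (Localization.AtPrime p) (LocalizedModule p.primeCompl M)
        ((Ideal.map (algebraMap R (Localization.AtPrime p)) p ^ n :
          Ideal (Localization.AtPrime p)) : Set (Localization.AtPrime p)) := fun m n =>
    ⟨m + n, Submodule.torsionBySet_le_torsionBySet_of_subset (Ideal.pow_le_pow_right (by omega)),
      Submodule.torsionBySet_le_torsionBySet_of_subset (Ideal.pow_le_pow_right (by omega))⟩
  rw [pTorsion, Submodule.mem_iSup_of_directed _ hdir, Localization.AtPrime.map_eq_maximalIdeal]
  simp only [Submodule.mem_torsionBySet_iff]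
  exact exists_congr fun n => ⟨fun h a ha => h ⟨a, ha⟩, fun h a => h a a.2⟩

lemma map_pTorsion_le (g : M →ₗ[R] N) :
    (pTorsion p M).map (LocalizedModule.map p.primeCompl g) ≤ pTorsion p N := by
  rintro _ ⟨x, hx, rfl⟩
  obtain ⟨n, hn⟩ := mem_pTorsion_iff.mp hx
  exact mem_pTorsion_iff.mpr ⟨n, fun a ha => by rw [← map_smul, hn a ha, map_zero]⟩

lemma comap_pTorsion_of_injective {g : M →ₗ[R] N} (hg : Function.Injective g) :
    (pTorsion p N).comap (LocalizedModule.map p.primeCompl g) = pTorsion p M := by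
  refine le_antisymm (fun x hx => ?_) (Submodule.map_le_iff_le_comap.mp (map_pTorsion_le g))
  obtain ⟨n, hn⟩ := mem_pTorsion_iff.mp hx
  refine mem_pTorsion_iff.mpr ⟨n, fun a ha => LocalizedModule.map_injective _ g hg ?_⟩
  rw [map_smul, hn a ha, map_zero]

/-- `H⁰_𝔭(M)` is an `R_𝔭`-module killed by a power of the maximal ideal, so each of its
associated primes is the maximal ideal of `R_𝔭`, and these lie over `𝔭 ∈ Ass(M)`. -/
lemma pTorsion_eq_bot_of_notMem_associatedPrimes [IsNoetherianRing R]
    (hp : p ∉ associatedPrimes R M) : pTorsion p M = ⊥ := by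
  refine (Submodule.eq_bot_iff _).mpr fun x hx => by_contra fun hx0 => hp ?_
  obtain ⟨n, hn⟩ := mem_pTorsion_iff.mp hx
  obtain ⟨q, hq, hle⟩ :=
    exists_le_isAssociatedPrime_of_isNoetherianRing (Localization.AtPrime p) x hx0
  have : q.IsPrime := hq.isPrime
  have hq_max : q = maximalIdeal (Localization.AtPrime p) :=
    (maximalIdeal.isMaximal _).eq_of_le hq.isPrime.ne_top
      (Ideal.IsPrime.le_of_pow_le fun a ha => hle <| by
        rw [Submodule.mem_colon_singleton, Submodule.mem_bot]
        exact hn a ha) |>.symm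
  have hfg : (q.comap (algebraMap R (Localization.AtPrime p))).FG :=
    (isNoetherianRing_iff_ideal_fg R).mp ‹_› _
  have := Module.associatedPrimes.comap_mem_associatedPrimes_of_mem_associatedPrimes_of_isLocalizedModule_of_fg
    p.primeCompl (LocalizedModule.mkLinearMap p.primeCompl M) q hq hfg
  rwa [hq_max, ← Ideal.under_def, Localization.AtPrime.under_maximalIdeal] at this

end pTorsion

lemma modLength_congr {A M N : Type*} [Ring A] [AddCommGroup M] [Module A M]
    [AddCommGroup N] [Module A N] (e : M ≃ₗ[A] N) : modLength A M = modLength A N :=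
  Order.krullDim_eq_of_orderIso (Submodule.orderIsoMapComap e)

theorem ker_open_of_disjoint_ass_general {R : Type*} [CommRing R] [IsNoetherianRing R]
    {M N : Type*} [AddCommGroup M] [Module R M]
    [AddCommGroup N] [Module R N]
    (hdisj : associatedPrimes R M ∩ associatedPrimes R N = ∅)
    (f : M →ₗ[R] N) :
    ∀ p : PrimeSpectrum R, p.asIdeal ∈ associatedPrimes R M →
      Submodule.map
          (LocalizedModule.map p.asIdeal.primeCompl (LinearMap.ker f).subtype)
          (pTorsion p.asIdeal (LinearMap.ker f))
        = pTorsion p.asIdeal M ∧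
      lmult p (LinearMap.ker f) = lmult p M := by
  intro p hp
  set g := LocalizedModule.map p.asIdeal.primeCompl (LinearMap.ker f).subtype
  have hpN : p.asIdeal ∉ associatedPrimes R N := fun hpN => hdisj.subset ⟨hp, hpN⟩
  have hexact : Function.Exact g (LocalizedModule.map p.asIdeal.primeCompl f) :=
    LocalizedModule.map_exact _ _ _ f.exact_subtype_ker_map
  have hle : pTorsion p.asIdeal M ≤ LinearMap.range g := fun x hx =>
    (hexact x).mp <| by
      simpa [pTorsion_eq_bot_of_notMem_associatedPrimes hpN] using
        map_pTorsion_le (p := p.asIdeal) f ⟨x, hx, rfl⟩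
  have hmap : (pTorsion p.asIdeal (LinearMap.ker f)).map g = pTorsion p.asIdeal M := by
    rw [← comap_pTorsion_of_injective (LinearMap.ker f).injective_subtype]
    exact Submodule.map_comap_eq_of_le hle
  have hg : Function.Injective g :=
    LocalizedModule.map_injective _ _ (LinearMap.ker f).injective_subtype
  exact ⟨hmap, modLength_congr ((Submodule.equivMapOfInjective g hg _).trans (.ofEq _ _ hmap))⟩

/-- If `M` and `N` are finitely generated modules over a commutative Noetherian ring with no
associated primes in common, then for every `R`-linear map `f : M → N` and every associated
prime `𝔭` of `M`, the `𝔭`-torsion of `(ker f)_𝔭` coincides with the `𝔭`-torsion of `M_𝔭`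
(under the localized inclusion); in particular `ℓ_𝔭(ker f) = ℓ_𝔭(M)`. -/
theorem ker_open_of_disjoint_ass {R : Type*} [CommRing R] [IsNoetherianRing R]
    {M N : Type*} [AddCommGroup M] [Module R M] [Module.Finite R M]
    [AddCommGroup N] [Module R N] [Module.Finite R N]
    (hdisj : associatedPrimes R M ∩ associatedPrimes R N = ∅)
    (f : M →ₗ[R] N) :
    ∀ p : PrimeSpectrum R, p.asIdeal ∈ associatedPrimes R M →
      Submodule.map
          (LocalizedModule.map p.asIdeal.primeCompl (LinearMap.ker f).subtype)
          (pTorsion p.asIdeal (LinearMap.ker f))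
        = pTorsion p.asIdeal M ∧
      lmult p (LinearMap.ker f) = lmult p M :=
  ker_open_of_disjoint_ass_general hdisj f
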